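/- arXiv:2507.19322 — 3 statements merged into one kernel-verified Lean document; each statement's English description precedes it below -/
import Mathlib

section
/- Fix an integer i ≥ 1 and let ψ = 1/φ with φ = (1+√5)/2. Suppose a sequence {m_t}_{t≥i} of nonnegative reals satisfies m_i = 1 and m_{t+1} = m_t + (1/(t(t+1)))·∑_{s=i}^{t} m_s for all t ≥ i. Then m_t ≤ (Γ(i-ψ)/Γ(i)) · Γ(t)/Γ(t-ψ) for all t ≥ i. -/
/-!
The partial sums `S t = ∑_{s=i}^t m s` satisfy `S t ≤ φ⁻¹ (t + 1) m t`; the induction closes because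
`φ⁻¹² + φ⁻¹ = 1` and `φ⁻¹ ≥ 1/2`. Feeding this into the recursion gives
`m (t+1) ≤ (1 + φ⁻¹/t) m t ≤ t / (t - φ⁻¹) · m t`, and `t / (t - φ⁻¹)` is exactly the one-step ratio
of `Γ t / Γ (t - φ⁻¹)`.
-/

open Finset Real

lemma inv_goldenRatio_sq_add_self : goldenRatio⁻¹ ^ 2 + goldenRatio⁻¹ = 1 := by
  rw [inv_goldenRatio, neg_sq, goldenConj_sq]
  ring

lemma one_half_lt_inv_goldenRatio : 1 / 2 < goldenRatio⁻¹ := by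
  rw [one_div]
  exact inv_strictAnti₀ goldenRatio_pos goldenRatio_lt_two

lemma inv_goldenRatio_lt_one : goldenRatio⁻¹ < 1 :=
  inv_lt_one_of_one_lt₀ one_lt_goldenRatio

lemma Real.Gamma_add_one_div_Gamma_add_one_sub {x a : ℝ} (hx : x ≠ 0) (hxa : x - a ≠ 0) :
    Gamma (x + 1) / Gamma (x + 1 - a) = x / (x - a) * (Gamma x / Gamma (x - a)) := by
  rw [add_sub_right_comm, Gamma_add_one hx, Gamma_add_one hxa, mul_div_mul_comm]

lemma le_of_succ_le_mul_of_succ_eq_mul {i : ℕ} {a b r : ℕ → ℝ} (hr : ∀ t, i ≤ t → 0 ≤ r t)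
    (ha : ∀ t, i ≤ t → a (t + 1) ≤ r t * a t) (hb : ∀ t, i ≤ t → b (t + 1) = r t * b t)
    (hi : a i ≤ b i) {t : ℕ} (ht : i ≤ t) : a t ≤ b t := by
  induction t, ht using Nat.le_induction with
  | base => exact hi
  | succ t ht ih =>
    calc a (t + 1) ≤ r t * a t := ha t ht
      _ ≤ r t * b t := mul_le_mul_of_nonneg_left ih (hr t ht)
      _ = b (t + 1) := (hb t ht).symm

def MeanDegreeRec (i : ℕ) (m : ℕ → ℝ) : Prop :=
  ∀ t, i ≤ t → m (t + 1) = m t + (1 / ((t : ℝ) * (t + 1))) * ∑ s ∈ Icc i t, m s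

namespace MeanDegreeRec

variable {i t : ℕ} {m : ℕ → ℝ}

lemma nonneg_and_sum_Icc_nonneg (hrec : MeanDegreeRec i m) (hinit : m i = 1) (ht : i ≤ t) :
    0 ≤ m t ∧ 0 ≤ ∑ s ∈ Icc i t, m s := by
  induction t, ht using Nat.le_induction with
  | base => simp [hinit]
  | succ t ht ih =>
    have hm : 0 ≤ m (t + 1) := by
      rw [hrec t ht]
      exact add_nonneg ih.1 (mul_nonneg (by positivity) ih.2)
    rw [sum_Icc_succ_top (ht.trans t.le_succ)]
    exact ⟨hm, add_nonneg ih.2 hm⟩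

lemma sum_Icc_le (hi : 1 ≤ i) (hrec : MeanDegreeRec i m) (hinit : m i = 1) (ht : i ≤ t) :
    ∑ s ∈ Icc i t, m s ≤ goldenRatio⁻¹ * (t + 1) * m t := by
  have hr := inv_goldenRatio_sq_add_self
  have hr_half := one_half_lt_inv_goldenRatio
  have hr_one := inv_goldenRatio_lt_one
  set r := goldenRatio⁻¹
  induction t, ht using Nat.le_induction with
  | base =>
    have : (1 : ℝ) ≤ i := by exact_mod_cast hi
    simp only [Icc_self, sum_singleton, hinit]
    nlinarith
  | succ t ht ih =>
    have ht1 : (1 : ℝ) ≤ t := by exact_mod_cast hi.trans ht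
    have hP : (0 : ℝ) < t * (t + 1) := by positivity
    have hm : 0 ≤ m t := (hrec.nonneg_and_sum_Icc_nonneg hinit ht).1
    have hstep : m (t + 1) * (t * (t + 1)) = m t * (t * (t + 1)) + ∑ s ∈ Icc i t, m s := by
      rw [hrec t ht]
      field_simp
    set S := ∑ s ∈ Icc i t, m s
    -- after clearing `t (t+1)`, the slack is `r (2r - 1) (t+1) m t` plus a multiple of `ih`'s slack
    have hslack : t * (t + 1) * (r * (t + 2) * m (t + 1) - (S + m (t + 1))) =
        (t + 1) * r * (2 * r - 1) * m t +
          (r * (t + 1) * m t - S) * (t * (t + 1) + 1 - r * (t + 2)) := by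
      linear_combination (r * (t + 2) - 1) * hstep + ((t + 1) * t * m t) * hr
    have hcoef : 0 ≤ (t : ℝ) * (t + 1) + 1 - r * (t + 2) := by nlinarith
    have hcleared : 0 ≤ t * (t + 1) * (r * (t + 2) * m (t + 1) - (S + m (t + 1))) := by
      rw [hslack]
      have : 0 ≤ r * (t + 1) * m t - S := by linarith
      have : 0 ≤ 2 * r - 1 := by linarith
      positivity
    rw [sum_Icc_succ_top (ht.trans t.le_succ)]
    push_cast
    linarith [(mul_nonneg_iff_of_pos_left hP).1 hcleared]

lemma succ_le (hi : 1 ≤ i) (hrec : MeanDegreeRec i m) (hinit : m i = 1) (ht : i ≤ t) :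
    m (t + 1) ≤ t / (t - goldenRatio⁻¹) * m t := by
  have hS := hrec.sum_Icc_le hi hinit ht
  have hm := (hrec.nonneg_and_sum_Icc_nonneg hinit ht).1
  have hr_one := inv_goldenRatio_lt_one
  set r := goldenRatio⁻¹
  have ht1 : (1 : ℝ) ≤ t := by exact_mod_cast hi.trans ht
  have htr : 0 < (t : ℝ) - r := by linarith
  calc m (t + 1) = m t + 1 / (t * (t + 1)) * ∑ s ∈ Icc i t, m s := hrec t ht
    _ ≤ m t + 1 / (t * (t + 1)) * (r * (t + 1) * m t) := by gcongr
    _ = (t + r) / t * m t := by field_simp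
    _ ≤ t / (t - r) * m t := by
      refine mul_le_mul_of_nonneg_right ?_ hm
      rw [div_le_div_iff₀ (by linarith) htr]
      nlinarith [sq_nonneg r]

end MeanDegreeRec

theorem mean_degree_gamma_upper_bound_general (i : ℕ) (hi : 1 ≤ i)
    (m : ℕ → ℝ) (hinit : m i = 1)
    (hrec : ∀ t, i ≤ t →
      m (t + 1) = m t + (1 / ((t : ℝ) * (t + 1))) * ∑ s ∈ Finset.Icc i t, m s) :
    let ψ : ℝ := 1 / ((1 + Real.sqrt 5) / 2)
    ∀ t, i ≤ t →
      m t ≤ (Real.Gamma ((i : ℝ) - ψ) / Real.Gamma i) *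
        (Real.Gamma t / Real.Gamma ((t : ℝ) - ψ)) := by
  intro ψ t ht
  have hψ : ψ = goldenRatio⁻¹ := one_div _
  have hψ_one : ψ < 1 := hψ ▸ inv_goldenRatio_lt_one
  have hone : ∀ s, i ≤ s → (1 : ℝ) ≤ s := fun s hs => by exact_mod_cast hi.trans hs
  have hpos : ∀ s, i ≤ s → (0 : ℝ) < s - ψ := fun s hs => by linarith [hone s hs]
  refine le_of_succ_le_mul_of_succ_eq_mul (r := fun s : ℕ => (s : ℝ) / (s - ψ))
    (b := fun s : ℕ => Gamma (i - ψ) / Gamma i * (Gamma s / Gamma (s - ψ)))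
    (fun s hs => (div_pos (by linarith [hone s hs]) (hpos s hs)).le)
    (fun s hs => by rw [hψ]; exact MeanDegreeRec.succ_le hi hrec hinit hs) (fun s hs => ?_) ?_ ht
  · push_cast
    rw [Gamma_add_one_div_Gamma_add_one_sub (by linarith [hone s hs]) (hpos s hs).ne']
    ring
  · have := Gamma_pos_of_pos (hpos i le_rfl)
    have := Gamma_pos_of_pos (show (0 : ℝ) < i by exact_mod_cast hi)
    field_simp
    exact hinit.le

/-- Gamma-quotient upper bound for the recursion m_{t+1} = m_t + (∑_{s=i}^t m_s)/(t(t+1)). -/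
theorem mean_degree_gamma_upper_bound (i : ℕ) (hi : 1 ≤ i)
    (m : ℕ → ℝ) (hnonneg : ∀ t, i ≤ t → 0 ≤ m t) (hinit : m i = 1)
    (hrec : ∀ t, i ≤ t →
      m (t + 1) = m t + (1 / ((t : ℝ) * (t + 1))) * ∑ s ∈ Finset.Icc i t, m s) :
    let ψ : ℝ := 1 / ((1 + Real.sqrt 5) / 2)
    ∀ t, i ≤ t →
      m t ≤ (Real.Gamma ((i : ℝ) - ψ) / Real.Gamma i) *
        (Real.Gamma t / Real.Gamma ((t : ℝ) - ψ)) :=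
  mean_degree_gamma_upper_bound_general i hi m hinit hrec
end

section
/- Fix an integer i ≥ 1 and let β_{t+1} = F_t(β_t) with β_i = i, where F_t(x) = (x(t+1)+1)/(x + t + 1/(t+1)). Then 1 ≤ β_t for all t ≥ i, lim_{t→∞} β_t = φ = (1+√5)/2, and there exists a finite T(i) ≥ i such that t ↦ β_t is strictly decreasing for i ≤ t < T(i) and strictly increasing for t ≥ T(i). -/
/-! With `s = t + 1`, `F_t x - φ = ((s - φ)(x - φ) - φ / s) / D` with denominator `D ≥ s`, so
`|β_t - φ| = O(1 / t)`. The fixed points of `F_t` are the roots of `x² - (1 - 1/s) x - 1`, so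
`F_t` moves `x > 0` up exactly below the positive root; as `F_t` is increasing and that root
increases with `t`, one non-decreasing step forces strict increase forever after. The sequence
cannot decrease forever: it would stay above `φ`, and `(t + 1)² (β_t - φ)` would then drop by at
least `φ / 2` per step. -/

open Filter Real
open scoped goldenRatio Topology

namespace BetaAnnealing

lemma three_halves_le_goldenRatio : (3 : ℝ) / 2 ≤ φ := by
  nlinarith [goldenRatio_sq, goldenRatio_pos, goldenRatio_lt_two]

noncomputable def F (t x : ℝ) : ℝ := (x * (t + 1) + 1) / (x + t + 1 / (t + 1))

section Step

variable {t x : ℝ}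

lemma F_denom_pos (ht : 0 ≤ t) (hx : 0 ≤ x) : 0 < x + t + 1 / (t + 1) := by
  have : 0 < 1 / (t + 1) := by positivity
  linarith

lemma F_pos (ht : 0 ≤ t) (hx : 0 ≤ x) : 0 < F t x :=
  div_pos (by positivity) (F_denom_pos ht hx)

lemma one_le_F (ht : 0 ≤ t) (hx : 1 ≤ x) : 1 ≤ F t x := by
  have hinv : 1 / (t + 1) ≤ 1 := by rw [div_le_one (by linarith)]; linarith
  rw [F, le_div_iff₀ (F_denom_pos ht (by linarith))]
  nlinarith [mul_nonneg (sub_nonneg.2 hx) ht]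

lemma F_sub_goldenRatio (ht : 0 ≤ t) (hx : 0 ≤ x) :
    F t x - φ = ((t + 1 - φ) * (x - φ) - φ / (t + 1)) / (x + t + 1 / (t + 1)) := by
  rw [F, eq_div_iff (F_denom_pos ht hx).ne', sub_mul, div_mul_cancel₀ _ (F_denom_pos ht hx).ne']
  linear_combination -goldenRatio_sq

/-- `3 ≤ M` enters through `φ ≤ M (φ - 1)`, i.e. `φ² ≤ M`. -/
lemma abs_F_sub_goldenRatio_le {M : ℝ} (ht : 1 ≤ t) (hx : 1 ≤ x) (hM : 3 ≤ M)
    (h : |x - φ| ≤ M / (t + 1)) : |F t x - φ| ≤ M / (t + 1 + 1) := by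
  have hφ := three_halves_le_goldenRatio
  have hφ2 := goldenRatio_lt_two
  have hs : 0 < t + 1 := by linarith
  have hD : t + 1 ≤ x + t + 1 / (t + 1) := by
    have : 0 < 1 / (t + 1) := by positivity
    linarith
  have hnum : |(t + 1 - φ) * (x - φ) - φ / (t + 1)| ≤ ((t + 1 - φ) * M + φ) / (t + 1) :=
    calc |(t + 1 - φ) * (x - φ) - φ / (t + 1)|
        ≤ |(t + 1 - φ) * (x - φ)| + |φ / (t + 1)| := abs_sub _ _
      _ = (t + 1 - φ) * |x - φ| + φ / (t + 1) := by
        rw [abs_mul, abs_of_nonneg (a := t + 1 - φ) (by linarith),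
          abs_of_pos (a := φ / (t + 1)) (by positivity)]
      _ ≤ (t + 1 - φ) * (M / (t + 1)) + φ / (t + 1) := by gcongr; linarith
      _ = ((t + 1 - φ) * M + φ) / (t + 1) := by ring
  rw [F_sub_goldenRatio (by linarith) (by linarith), abs_div,
    abs_of_pos (F_denom_pos (by linarith) (by linarith))]
  calc |(t + 1 - φ) * (x - φ) - φ / (t + 1)| / (x + t + 1 / (t + 1))
      ≤ ((t + 1 - φ) * M + φ) / (t + 1) / (t + 1) :=
        div_le_div₀ ((abs_nonneg _).trans hnum) hnum hs hD
    _ ≤ M / (t + 1 + 1) := by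
      rw [div_div, div_le_div_iff₀ (by positivity) (by positivity)]
      nlinarith [mul_nonneg (by linarith : (0 : ℝ) ≤ M - 3) (by linarith : (0 : ℝ) ≤ t),
        mul_nonneg (mul_nonneg (by linarith : (0 : ℝ) ≤ M - 1)
          (by linarith : (0 : ℝ) ≤ t + 2)) (by linarith : (0 : ℝ) ≤ φ - 3 / 2)]

lemma sq_mul_F_sub_goldenRatio_le (ht : 1 ≤ t) (hφx : φ < x) (hx : x ≤ t + 1) :
    (t + 1 + 1) ^ 2 * (F t x - φ) ≤ (t + 1) ^ 2 * (x - φ) - φ / 2 := by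
  have hφ := three_halves_le_goldenRatio
  have hφ2 := goldenRatio_lt_two
  have hs : 0 < t + 1 := by linarith
  have hinv : 0 < 1 / (t + 1) := by positivity
  have hinv1 : 1 / (t + 1) ≤ 1 := by rw [div_le_one hs]; linarith
  set D := x + t + 1 / (t + 1) with hDdef
  have hDpos : 0 < D := F_denom_pos (by linarith) (by linarith)
  have hDl : t + φ ≤ D := by linarith
  have hDu : D ≤ 2 * (t + 1) := by linarith
  rw [F_sub_goldenRatio (by linarith) (by linarith), ← hDdef, mul_div_assoc', div_le_iff₀ hDpos]
  have hpoly : (t + 1 + 1) ^ 2 * (t + 1 - φ) ≤ (t + 1) ^ 2 * (t + φ) := by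
    nlinarith [mul_nonneg (by linarith : (0 : ℝ) ≤ φ - 3 / 2) (sq_nonneg (t + 1))]
  have hmain : (t + 1 + 1) ^ 2 * (t + 1 - φ) * (x - φ) ≤ (t + 1) ^ 2 * D * (x - φ) := by
    refine mul_le_mul_of_nonneg_right (hpoly.trans ?_) (by linarith)
    exact mul_le_mul_of_nonneg_left hDl (by positivity)
  have htail : φ / 2 * D ≤ (t + 1 + 1) ^ 2 * (φ / (t + 1)) := by
    rw [mul_div_assoc', le_div_iff₀ hs]
    nlinarith [mul_le_mul_of_nonneg_left hDu goldenRatio_pos.le]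
  nlinarith

lemma monotoneOn_F (ht : 0 ≤ t) : MonotoneOn (F t) (Set.Ici 0) := by
  intro x hx y hy hxy
  simp only [Set.mem_Ici] at hx hy
  have hs : t + 1 ≠ 0 := by linarith
  have key : (y * (t + 1) + 1) * (x + t + 1 / (t + 1)) - (x * (t + 1) + 1) * (y + t + 1 / (t + 1))
      = (y - x) * ((t + 1) * t) := by
    field_simp
    ring
  rw [F, F, div_le_div_iff₀ (F_denom_pos ht hx) (F_denom_pos ht hy)]
  nlinarith [mul_nonneg (sub_nonneg.2 hxy) (mul_nonneg (by linarith : 0 ≤ t + 1) ht)]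

lemma le_F_iff (ht : 0 ≤ t) (hx : 0 ≤ x) : x ≤ F t x ↔ x / (t + 1) ≤ 1 + x - x ^ 2 := by
  have : x * (x + t + 1 / (t + 1)) = x ^ 2 + x * t + x / (t + 1) := by ring
  rw [F, le_div_iff₀ (F_denom_pos ht hx), this]
  constructor <;> intro h <;> linarith

lemma lt_F_iff (ht : 0 ≤ t) (hx : 0 ≤ x) : x < F t x ↔ x / (t + 1) < 1 + x - x ^ 2 := by
  have : x * (x + t + 1 / (t + 1)) = x ^ 2 + x * t + x / (t + 1) := by ring
  rw [F, lt_div_iff₀ (F_denom_pos ht hx), this]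
  constructor <;> intro h <;> linarith

/-- `F t` is monotone, so it also moves `F t x` up, and `F (t + 1)` moves positive points up
more than `F t` does. -/
lemma F_lt_F_succ_F (ht : 0 ≤ t) (hx : 0 ≤ x) (h : x ≤ F t x) :
    F t x < F (t + 1) (F t x) := by
  have hy := F_pos ht hx
  have hmono : F t x ≤ F t (F t x) :=
    monotoneOn_F ht (Set.mem_Ici.2 hx) (Set.mem_Ici.2 hy.le) h
  rw [le_F_iff ht hy.le] at hmono
  rw [lt_F_iff (by linarith) hy.le]
  calc F t x / (t + 1 + 1) < F t x / (t + 1) := by gcongr; linarith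
    _ ≤ _ := hmono

end Step

lemma exists_neg_of_le_sub {u : ℕ → ℝ} {c : ℝ} (hc : 0 < c) (h : ∀ n, u (n + 1) ≤ u n - c) :
    ∃ n, u n < 0 := by
  have hlin : ∀ n : ℕ, u n ≤ u 0 - n * c := by
    intro n
    induction n with
    | zero => simp
    | succ n ih => push_cast; linarith [h n]
  obtain ⟨n, hn⟩ := exists_nat_gt (u 0 / c)
  rw [div_lt_iff₀ hc] at hn
  exact ⟨n, by linarith [hlin n]⟩

section Sequence

variable {i : ℕ} {β : ℕ → ℝ}

lemma one_le_of_rec (hrec : ∀ t : ℕ, i ≤ t → β (t + 1) = F t (β t)) (hinit : 1 ≤ β i) :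
    ∀ t, i ≤ t → 1 ≤ β t := by
  intro t ht
  induction t, ht using Nat.le_induction with
  | base => exact hinit
  | succ t ht ih => rw [hrec t ht]; exact one_le_F t.cast_nonneg ih

lemma abs_sub_goldenRatio_le (hrec : ∀ t : ℕ, i ≤ t → β (t + 1) = F t (β t)) (hi : 1 ≤ i)
    (hlow : ∀ t, i ≤ t → 1 ≤ β t) :
    ∀ t, i ≤ t → |β t - φ| ≤ max 3 ((i + 1) * |β i - φ|) / (t + 1) := by
  intro t ht
  induction t, ht using Nat.le_induction with
  | base => rw [le_div_iff₀ (by positivity), mul_comm]; exact le_max_right _ _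
  | succ t ht ih =>
    rw [hrec t ht, Nat.cast_succ]
    exact abs_F_sub_goldenRatio_le (by exact_mod_cast hi.trans ht) (hlow t ht)
      (le_max_left _ _) ih

lemma tendsto_goldenRatio (hrec : ∀ t : ℕ, i ≤ t → β (t + 1) = F t (β t)) (hi : 1 ≤ i)
    (hlow : ∀ t, i ≤ t → 1 ≤ β t) : Tendsto β atTop (𝓝 φ) := by
  set M := max 3 ((i + 1) * |β i - φ|)
  have hM : Tendsto (fun t : ℕ => M / ((t : ℝ) + 1)) atTop (𝓝 0) :=
    tendsto_const_div_atTop_nhds_zero_nat M |>.comp (tendsto_add_atTop_nat 1) |>.congr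
      fun t => by simp
  refine tendsto_sub_nhds_zero_iff.1 (squeeze_zero_norm' ?_ hM)
  filter_upwards [eventually_ge_atTop i] with t ht
  exact abs_sub_goldenRatio_le hrec hi hlow t ht

/-- A sequence that decreased forever would stay above its limit `φ`, and then the weighted
distance `(t + 1)² (β t - φ)` would fall linearly below zero. -/
lemma exists_le_succ (hrec : ∀ t : ℕ, i ≤ t → β (t + 1) = F t (β t)) (hi : 1 ≤ i)
    (hinit : β i ≤ i) (hconv : Tendsto β atTop (𝓝 φ)) : ∃ t, i ≤ t ∧ β t ≤ β (t + 1) := by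
  by_contra! hdec
  have hanti : Antitone fun n => β (i + n) :=
    antitone_nat_of_succ_le fun n => (hdec (i + n) (by omega)).le
  have hlim : Tendsto (fun n => β (i + n)) atTop (𝓝 φ) :=
    hconv.comp (tendsto_atTop_mono (Nat.le_add_left · i) tendsto_id)
  have hgt (n : ℕ) : φ < β (i + n) :=
    (hanti.le_of_tendsto hlim (n + 1)).trans_lt (hdec (i + n) (by omega))
  have hle (n : ℕ) : β (i + n) ≤ i + n + 1 := by
    have := hanti (Nat.zero_le n)
    simp only [add_zero] at this
    linarith [(n.cast_nonneg : (0 : ℝ) ≤ n)]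
  obtain ⟨n, hn⟩ := exists_neg_of_le_sub
    (u := fun n => (((i + n : ℕ) : ℝ) + 1) ^ 2 * (β (i + n) - φ)) (c := φ / 2) (by positivity)
    fun n => by
      have := sq_mul_F_sub_goldenRatio_le (t := ((i + n : ℕ) : ℝ))
        (by exact_mod_cast hi.trans (by omega)) (hgt n) (by push_cast; exact hle n)
      rw [← hrec (i + n) (by omega)] at this
      simpa only [Nat.cast_add, Nat.cast_one, add_assoc] using this
  exact (mul_pos (by positivity) (sub_pos.2 (hgt n))).not_gt hn

lemma lt_succ_succ_of_le_succ (hrec : ∀ t : ℕ, i ≤ t → β (t + 1) = F t (β t)) {t : ℕ}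
    (ht : i ≤ t) (hpos : 0 ≤ β t) (h : β t ≤ β (t + 1)) : β (t + 1) < β (t + 2) := by
  rw [hrec (t + 1) (by omega), hrec t ht, Nat.cast_succ] at *
  exact F_lt_F_succ_F t.cast_nonneg hpos h

end Sequence

end BetaAnnealing

open BetaAnnealing in
/-- The annealed sequence β_{t+1} = F_t(β_t), β_i = i, satisfies β_t ≥ 1, converges to
the golden ratio φ, and is strictly decreasing up to some finite time T(i) ≥ i and
strictly increasing afterwards. -/
theorem beta_convergence_and_crossover (i : ℕ) (hi : 1 ≤ i)
    (β : ℕ → ℝ) (hinit : β i = i)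
    (hrec : ∀ t, i ≤ t →
      β (t + 1) = (β t * (t + 1) + 1) / (β t + t + 1 / ((t : ℝ) + 1))) :
    (∀ t, i ≤ t → 1 ≤ β t) ∧
      Tendsto β atTop (nhds ((1 + Real.sqrt 5) / 2)) ∧
      ∃ T : ℕ, i ≤ T ∧
        (∀ t, i ≤ t → t + 1 < T → β (t + 1) < β t) ∧
        (∀ t, T ≤ t → β t < β (t + 1)) := by
  have hF : ∀ t : ℕ, i ≤ t → β (t + 1) = F t (β t) := hrec
  have hlow := one_le_of_rec hF (by rw [hinit]; exact_mod_cast hi)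
  have hconv := tendsto_goldenRatio hF hi hlow
  have hturn := exists_le_succ hF hi hinit.le hconv
  classical
  let t₀ := Nat.find hturn
  have ht₀ : i ≤ t₀ := (Nat.find_spec hturn).1
  have hinc : ∀ t, t₀ ≤ t → β t ≤ β (t + 1) → β (t + 1) < β (t + 2) := fun t ht =>
    lt_succ_succ_of_le_succ hF (ht₀.trans ht) (by linarith [hlow t (ht₀.trans ht)])
  refine ⟨hlow, hconv, t₀ + 1, by omega, fun t ht hT => ?_, fun t ht => ?_⟩
  · exact lt_of_not_ge fun h => Nat.find_min hturn (by omega : t < t₀) ⟨ht, h⟩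
  · induction t, ht using Nat.le_induction with
    | base => exact hinc t₀ le_rfl (Nat.find_spec hturn).2
    | succ t ht ih => exact hinc t (by omega) ih.le
end

section
/- Suppose nonnegative reals {Δ̃_t}_{t≥T} satisfy Δ̃_{t+1} ≤ δ_t + η̃_t Δ̃_t, where δ_t ≥ 0 with ∑_{t≥T} δ_t < ∞, and η̃_t ∈ (0,1) satisfies 1 - η̃_t = 1/t + O(1/t²). Then lim_{t→∞} Δ̃_t = 0. -/
/-!
Unrolling the recursion from any time `S` gives
`Δ_{S+n} ≤ (∏_{i<n} η_{S+i}) Δ_S + ∑_{i≥S} δ_i`. Since `1 - η_t = 1/t + O(1/t²)` is not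
summable, `∏ η_t ≤ exp (-∑ (1 - η_t)) → 0`, so `limsup Δ` is at most the tail `∑_{i≥S} δ_i`,
which is arbitrarily small.
-/

open Filter Topology Finset Asymptotics

theorem not_summable_of_isBigO_sub_one_div {a : ℕ → ℝ}
    (ha : (fun t : ℕ => a t - 1 / (t : ℝ)) =O[atTop] fun t : ℕ => 1 / (t : ℝ) ^ 2) :
    ¬Summable a := fun hsum =>
  Real.not_summable_one_div_natCast <| by
    simpa using hsum.sub (summable_of_isBigO_nat' (Real.summable_one_div_nat_pow.2 one_lt_two) ha)

theorem tendsto_prod_range_zero_of_not_summable_one_sub {η : ℕ → ℝ}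
    (hη : ∀ t, η t ∈ Set.Icc (0 : ℝ) 1) (hsum : ¬Summable fun t => 1 - η t) :
    Tendsto (fun n => ∏ i ∈ range n, η i) atTop (𝓝 0) := by
  have hdiv : Tendsto (fun n => ∑ i ∈ range n, (1 - η i)) atTop atTop :=
    (not_summable_iff_tendsto_nat_atTop_of_nonneg fun t => sub_nonneg.2 (hη t).2).1 hsum
  have hexp : Tendsto (fun n => Real.exp (-∑ i ∈ range n, (1 - η i))) atTop (𝓝 0) :=
    Real.tendsto_exp_atBot.comp (tendsto_neg_atTop_atBot.comp hdiv)
  refine squeeze_zero (fun n => prod_nonneg fun i _ => (hη i).1) (fun n => ?_) hexp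
  rw [← sum_neg_distrib, Real.exp_sum]
  refine prod_le_prod (fun i _ => (hη i).1) fun i _ => ?_
  simpa using Real.add_one_le_exp (η i - 1)

section Recursion

variable {Δ δ η : ℕ → ℝ}

theorem le_prod_mul_add_sum_of_le_mul_add (hδ : ∀ t, 0 ≤ δ t) (hη : ∀ t, η t ∈ Set.Icc (0 : ℝ) 1)
    (hrec : ∀ t, Δ (t + 1) ≤ δ t + η t * Δ t) (S n : ℕ) :
    Δ (n + S) ≤ (∏ i ∈ range n, η (i + S)) * Δ S + ∑ i ∈ range n, δ (i + S) := by
  induction n with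
  | zero => simp
  | succ n ih =>
    have hsum : 0 ≤ ∑ i ∈ range n, δ (i + S) := sum_nonneg fun i _ => hδ _
    obtain ⟨hη0, hη1⟩ := hη (n + S)
    rw [add_right_comm, prod_range_succ, sum_range_succ]
    calc Δ (n + S + 1) ≤ δ (n + S) + η (n + S) * Δ (n + S) := hrec _
      _ ≤ δ (n + S) + η (n + S) *
            ((∏ i ∈ range n, η (i + S)) * Δ S + ∑ i ∈ range n, δ (i + S)) := by gcongr
      _ ≤ _ := by nlinarith [mul_le_of_le_one_left hsum hη1]

theorem tendsto_zero_of_le_mul_add (hΔ : ∀ t, 0 ≤ Δ t) (hδ : ∀ t, 0 ≤ δ t) (hδsum : Summable δ)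
    (hη : ∀ t, η t ∈ Set.Icc (0 : ℝ) 1) (hηsum : ¬Summable fun t => 1 - η t)
    (hrec : ∀ t, Δ (t + 1) ≤ δ t + η t * Δ t) :
    Tendsto Δ atTop (𝓝 0) := by
  refine tendsto_order.2 ⟨fun a ha => Eventually.of_forall fun t => ha.trans_le (hΔ t),
    fun ε hε => ?_⟩
  obtain ⟨S, hS⟩ := ((tendsto_sum_nat_add δ).eventually_lt_const (half_pos hε)).exists
  have hprod : Tendsto (fun n => (∏ i ∈ range n, η (i + S)) * Δ S) atTop (𝓝 0) := by
    simpa using (tendsto_prod_range_zero_of_not_summable_one_sub (η := fun t => η (t + S)) (fun t => hη _)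
      (mt (summable_nat_add_iff (f := fun t => 1 - η t) S).1 hηsum)).mul_const (Δ S)
  have hshift : ∀ᶠ n in atTop, Δ (n + S) < ε := by
    filter_upwards [hprod.eventually_lt_const (half_pos hε)] with n hn
    have htail : ∑ i ∈ range n, δ (i + S) ≤ ∑' i, δ (i + S) :=
      ((summable_nat_add_iff (f := δ) S).2 hδsum).sum_le_tsum _ fun i _ => hδ _
    linarith [le_prod_mul_add_sum_of_le_mul_add hδ hη hrec S n]
  filter_upwards [(tendsto_sub_atTop_nat S).eventually hshift, eventually_ge_atTop S] with t ht hSt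
  rwa [Nat.sub_add_cancel hSt] at ht

end Recursion

/-- If 0 ≤ Δ̃_{t+1} ≤ δ_t + η̃_t Δ̃_t with δ_t ≥ 0 summable and η̃_t ∈ (0,1) satisfying
1 - η̃_t = 1/t + O(1/t²), then Δ̃_t → 0. -/
theorem perturbed_contraction_to_zero (T : ℕ) (Δ δ η : ℕ → ℝ)
    (hΔ : ∀ t, T ≤ t → 0 ≤ Δ t)
    (hδ : ∀ t, T ≤ t → 0 ≤ δ t)
    (hδsum : Summable (fun t : ℕ => if T ≤ t then δ t else 0))
    (hη : ∀ t, T ≤ t → η t ∈ Set.Ioo (0 : ℝ) 1)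
    (hrec : ∀ t, T ≤ t → Δ (t + 1) ≤ δ t + η t * Δ t)
    (hasymp : ∃ C : ℝ, ∀ t : ℕ, max T 1 ≤ t →
      |1 - η t - 1 / (t : ℝ)| ≤ C / (t : ℝ) ^ 2) :
    Tendsto Δ atTop (nhds 0) := by
  obtain ⟨C, hC⟩ := hasymp
  have hbigO : (fun t : ℕ => 1 - η t - 1 / (t : ℝ)) =O[atTop] fun t : ℕ => 1 / (t : ℝ) ^ 2 :=
    .of_bound C <| eventually_atTop.2 ⟨max T 1, fun t ht => by
      simpa [div_eq_mul_inv, abs_of_nonneg (inv_nonneg.2 (sq_nonneg (t : ℝ)))] using hC t ht⟩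
  have hT : ∀ t, T ≤ t + T := fun t => Nat.le_add_left T t
  refine (tendsto_add_atTop_iff_nat T).1 <|
    tendsto_zero_of_le_mul_add (Δ := fun t => Δ (t + T)) (δ := fun t => δ (t + T)) (η := fun t => η (t + T))
      (fun t => hΔ _ (hT t)) (fun t => hδ _ (hT t)) ?_
      (fun t => Set.Ioo_subset_Icc_self (hη _ (hT t)))
      (mt (summable_nat_add_iff (f := fun t => 1 - η t) T).1 (not_summable_of_isBigO_sub_one_div hbigO))
      (fun t => by simpa only [add_right_comm t 1 T] using hrec _ (hT t))
  simpa [hT] using (summable_nat_add_iff T).2 hδsum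
end
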